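/- Let α, β ∈ (0,1) with α < β, let φ ∈ (0,π), and let μ0, μ∞ ≥ 0. Set ν := α+β, c1 := (α−β)(1−β)/2, c2 := (α−β)(1+α)/2, and define J(n) := (1/ν)·A1(α,φ)·(n + c1) − (1/ν)·n^{−ν}·A2(α,β,φ)·(n + c2) − μ0·Γ(2−β) − μ∞·Γ(3+α,n)·n^{−1−ν} for real n > 0. Then for every real n ≥ 5 the function J is differentiable at n and J′(n) ≥ F2(α,β,φ), where F2(α,β,φ) := (1/ν)·[A1(α,φ) − 5^{−ν}·(|1−ν| + ν·|c2|/5)·A2(α,β,φ)]. -/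

import Mathlib

open Real MeasureTheory Set Finset

noncomputable section

/-- Generalized binomial coefficient `C(α,k) = (∏_{j=0}^{k-1} (α-j)) / k!`. -/
def genBinom (α : ℝ) (k : ℕ) : ℝ :=
  (∏ j ∈ Finset.range k, (α - j)) / (Nat.factorial k)

/-- Ascending Pochhammer symbol `(a)_k = a (a+1) ⋯ (a+k-1)`. -/
def pochh (a : ℝ) (k : ℕ) : ℝ := ∏ j ∈ Finset.range k, (a + j)

/-- `A_n(α,β,ω)`, the `n`-th Maclaurin coefficient of `(1+ωz)^α (1-z)^(-β)`. -/
def brA (α β : ℝ) (ω : ℂ) (n : ℕ) : ℂ :=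
  ∑ k ∈ Finset.range (n + 1),
    ((genBinom α k * (pochh β (n - k) / Nat.factorial (n - k)) : ℝ) : ℂ) * ω ^ k

/-- `A_n(α,β,x)` for real `x` (real-valued version). -/
def brAR (α β x : ℝ) (n : ℕ) : ℝ :=
  ∑ k ∈ Finset.range (n + 1),
    genBinom α k * (pochh β (n - k) / Nat.factorial (n - k)) * x ^ k

/-- `w_n(α,β,x)` for complex `x`. -/
def wC (α β : ℝ) (n : ℕ) (x : ℂ) : ℂ :=
  ((Real.Gamma (n - α) * Real.Gamma (1 + α) * Real.sin (π * α) / Nat.factorial n : ℝ) : ℂ) *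
    ∑ k ∈ Finset.range (n + 1),
      ((pochh β k * pochh (-(n : ℝ)) k / (pochh (α - n + 1) k * Nat.factorial k) : ℝ) : ℂ) * x ^ k

/-- `w_n(α,β,x)` for real `x` (real-valued version). -/
def wR (α β : ℝ) (n : ℕ) (x : ℝ) : ℝ :=
  (Real.Gamma (n - α) * Real.Gamma (1 + α) * Real.sin (π * α) / Nat.factorial n) *
    ∑ k ∈ Finset.range (n + 1),
      pochh β k * pochh (-(n : ℝ)) k / (pochh (α - n + 1) k * Nat.factorial k) * x ^ k

/-- `R(s,φ) = √(e^{2s} + 1 - 2 e^s cos φ)`. -/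
def Rker (s φ : ℝ) : ℝ := Real.sqrt (Real.exp (2 * s) + 1 - 2 * Real.exp s * Real.cos φ)

/-- `I₁(α,β,φ;n)`. -/
def brI1 (α β φ : ℝ) (n : ℕ) : ℝ :=
  ((π - φ) ^ 2)⁻¹ *
    ∫ s in Set.Ioi (0 : ℝ),
      (Real.exp s - 1) ^ (-β) * ((Real.exp s + 1) ^ α - Rker s φ ^ α) * Real.exp (-(n : ℝ) * s)

/-- `I₂(α,β,φ;n)`. -/
def brI2 (α β φ : ℝ) (n : ℕ) : ℝ :=
  ((π - φ) ^ 2)⁻¹ *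
    ∫ s in Set.Ioi (0 : ℝ),
      (Real.exp s - 1) ^ α * ((Real.exp s + 1) ^ (-β) - Rker s φ ^ (-β)) * Real.exp (-(n : ℝ) * s)

/-- `h(α,β,φ;n)`. -/
def hFun (α β φ : ℝ) (n : ℕ) : ℝ :=
  Real.sin (π * β) * brI1 α β φ n + Real.sin (π * α) * brI2 α β φ n

/-- `C₁(α,φ)`. -/
def C1f (α φ : ℝ) : ℝ :=
  ((π - φ) ^ 2)⁻¹ * ((2 : ℝ) ^ α - (2 * Real.sin (φ / 2)) ^ α)

/-- `C₂(β,φ)`. -/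
def C2f (β φ : ℝ) : ℝ :=
  ((π - φ) ^ 2)⁻¹ * ((2 * Real.sin (φ / 2)) ^ (-β) - (2 : ℝ) ^ (-β))

/-- `K₁(α,β,φ;s)`. -/
def K1f (α β φ s : ℝ) : ℝ :=
  (s ^ 2)⁻¹ *
    ((s / (Real.exp s - 1)) ^ β * ((Real.exp s + 1) ^ α - Rker s φ ^ α) /
        ((2 : ℝ) ^ α - (2 * Real.sin (φ / 2)) ^ α) - 1 - (α - β) / 2 * s)

/-- `K₂(α,β,φ;s)`. -/
def K2f (α β φ s : ℝ) : ℝ :=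
  (s ^ 2)⁻¹ *
    (((Real.exp s - 1) / s) ^ α * (Rker s φ ^ (-β) - (Real.exp s + 1) ^ (-β)) /
        ((2 * Real.sin (φ / 2)) ^ (-β) - (2 : ℝ) ^ (-β)) - 1 - (α - β) / 2 * s)

/-- `A₁(α,φ)`. -/
def A1f (α φ : ℝ) : ℝ :=
  (1 - α) * ((2 : ℝ) ^ α - (2 * Real.sin (φ / 2)) ^ α) /
    (Real.sin (π * α) * Real.Gamma (1 + α) * (π - φ) ^ 2)

/-- `A₂(α,β,φ)`. -/
def A2f (α β φ : ℝ) : ℝ :=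
  (1 - α) * Real.Gamma β * ((2 * Real.sin (φ / 2)) ^ (-β) - (2 : ℝ) ^ (-β)) /
    (π * (π - φ) ^ 2)

/-- `L(α,β,φ;s)`. -/
def Lf (α β φ s : ℝ) : ℝ :=
  s ^ 2 / (α + β) *
    (A1f α φ * K1f α β φ s / (Real.Gamma (1 - β) * s ^ β) -
      s ^ α * A2f α β φ * K2f α β φ s / Real.Gamma (1 + α))

/-- `E₀(α,β,φ;n)`. -/
def E0f (α β φ : ℝ) (n : ℕ) : ℝ :=
  (n : ℝ) ^ (1 + α - β) * ∫ s in (0:ℝ)..1, Lf α β φ s * Real.exp (-(n : ℝ) * s)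

/-- `E∞(α,β,φ;n)`. -/
def EInf (α β φ : ℝ) (n : ℕ) : ℝ :=
  (n : ℝ) ^ (1 + α - β) * ∫ s in Set.Ioi (1:ℝ), Lf α β φ s * Real.exp (-(n : ℝ) * s)

/-- Upper incomplete Gamma function `Γ(a,x) = ∫_x^∞ t^{a-1} e^{-t} dt`. -/
def iGamma (a x : ℝ) : ℝ := ∫ t in Set.Ioi x, t ^ (a - 1) * Real.exp (-t)

/-- `𝓗(α,β,φ;n)`. -/
def Hf (α β φ : ℝ) (n : ℕ) : ℝ :=
  (1 - α) * (n : ℝ) ^ (1 + α - β) * hFun α β φ n /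
    ((α + β) * Real.sin (π * α) * Real.sin (π * β) * Real.Gamma (1 - β) * Real.Gamma (1 + α))

/-- `𝓗⁽²⁾(α,β,φ;n)`. -/
def H2f (α β φ : ℝ) (n : ℕ) : ℝ :=
  (α + β)⁻¹ *
    (A1f α φ * (n : ℝ) ^ α * (1 + (α - β) * (1 - β) / (2 * n)) -
      A2f α β φ * (n : ℝ) ^ (-β) * (1 + (α - β) * (1 + α) / (2 * n)))

/-- `P_n(α,β,φ;μ₀,μ∞)` for real `n > 0`. -/
def Pf (n α β φ μ0 μi : ℝ) : ℝ :=
  (α + β)⁻¹ *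
      (A1f α φ * n ^ α * (1 + (α - β) * (1 - β) / (2 * n)) -
        A2f α β φ * n ^ (-β) * (1 + (α - β) * (1 + α) / (2 * n))) -
    μ0 * Real.Gamma (2 - β) * n ^ (α - 1) - μi * iGamma (3 + α) n * n ^ (-2 - β)

/-- `Q_n(α,β,φ)` for real `n > 0`. -/
def Qf (n α β φ : ℝ) : ℝ :=
  π * (α + β) * Real.sin (π * α) * Real.Gamma (1 + α) * (π - φ) ^ 2 /
    ((1 - α) * Real.Gamma β * n ^ (1 + α - β))

/-- `F₁(α,β,φ)`. -/
def F1f (α β φ : ℝ) : ℝ :=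
  (α + β)⁻¹ * (A1f α φ - max (1 - (α + β)) 0 * (5 : ℝ) ^ (-(α + β)) * A2f α β φ)

/-- `F₂(α,β,φ)`. -/
def F2f (α β φ : ℝ) : ℝ :=
  (α + β)⁻¹ *
    (A1f α φ -
      (5 : ℝ) ^ (-(α + β)) * (|1 - (α + β)| + (α + β) * |(α - β) * (1 + α) / 2| / 5) * A2f α β φ)

/-- `J(α,β,φ;μ₀,μ∞;n)` for real `n > 0`. -/
def Jf (α β φ μ0 μi : ℝ) (n : ℝ) : ℝ :=
  (α + β)⁻¹ * A1f α φ * (n + (α - β) * (1 - β) / 2) -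
    (α + β)⁻¹ * n ^ (-(α + β)) * A2f α β φ * (n + (α - β) * (1 + α) / 2) -
    μ0 * Real.Gamma (2 - β) - μi * iGamma (3 + α) n * n ^ (-1 - (α + β))

/-!
Differentiating termwise, `J'(n) = ν⁻¹A₁ - ν⁻¹A₂ g'(n) - μ∞ h'(n)` with
`g(n) = n^(-ν) (n + c₂)` and `h(n) = Γ(3+α, n) n^(-1-ν)`. Here `h` is a product of two
nonnegative nonincreasing functions, so `h' ≤ 0`, and
`g'(n) = (1-ν) n^(-ν) - ν c₂ n^(-ν-1)` is bounded termwise on `[5, ∞)` by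
`5^(-ν) (|1-ν| + ν|c₂|/5)`; since `A₂ ≥ 0` this gives `J' ≥ F₂`.
-/

lemma integrableOn_iGamma_integrand {a : ℝ} (ha : 0 < a) :
    IntegrableOn (fun t : ℝ => t ^ (a - 1) * exp (-t)) (Ioi 0) :=
  (GammaIntegral_convergent ha).congr_fun (fun _ _ => mul_comm _ _) measurableSet_Ioi

lemma hasDerivAt_iGamma {a x : ℝ} (ha : 0 < a) (hx : 0 < x) :
    HasDerivAt (iGamma a) (-(x ^ (a - 1) * exp (-x))) x := by
  set f : ℝ → ℝ := fun t => t ^ (a - 1) * exp (-t)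
  have hf := integrableOn_iGamma_integrand ha
  have hf_cont : ContinuousAt f x :=
    (continuousAt_rpow_const x _ (Or.inl hx.ne')).mul
      (continuous_exp.comp continuous_neg).continuousAt
  have hFTC : HasDerivAt (fun y => ∫ t in (0:ℝ)..y, f t) (f x) x :=
    intervalIntegral.integral_hasDerivAt_right
      ((intervalIntegrable_iff_integrableOn_Ioc_of_le hx.le).2 (hf.mono_set Ioc_subset_Ioi_self))
      ⟨_, Ioi_mem_nhds hx, hf.aestronglyMeasurable⟩ hf_cont
  have hsplit : iGamma a =ᶠ[nhds x] fun y => (∫ t in Ioi 0, f t) - ∫ t in (0:ℝ)..y, f t := by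
    filter_upwards [Ioi_mem_nhds hx] with y hy
    rw [← intervalIntegral.integral_Ioi_sub_Ioi hf (le_of_lt hy), sub_sub_cancel, iGamma]
  simpa using ((hasDerivAt_const x _).sub hFTC).congr_of_eventuallyEq hsplit

lemma iGamma_nonneg (a : ℝ) {x : ℝ} (hx : 0 ≤ x) : 0 ≤ iGamma a x :=
  setIntegral_nonneg measurableSet_Ioi fun _ ht =>
    mul_nonneg (rpow_nonneg (hx.trans (le_of_lt ht)) _) (exp_pos _).le

lemma hasDerivAt_iGamma_mul_rpow {a x : ℝ} (p : ℝ) (ha : 0 < a) (hx : 0 < x) :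
    HasDerivAt (fun y => iGamma a y * y ^ p)
      (-(x ^ (a - 1) * exp (-x)) * x ^ p + iGamma a x * (p * x ^ (p - 1))) x :=
  (hasDerivAt_iGamma ha hx).mul (hasDerivAt_rpow_const (Or.inl hx.ne'))

lemma iGamma_mul_rpow_deriv_nonpos {a p x : ℝ} (hp : p ≤ 0) (hx : 0 < x) :
    -(x ^ (a - 1) * exp (-x)) * x ^ p + iGamma a x * (p * x ^ (p - 1)) ≤ 0 := by
  have h₁ : 0 ≤ x ^ (a - 1) * exp (-x) * x ^ p := by positivity
  have h₂ : iGamma a x * (p * x ^ (p - 1)) ≤ 0 :=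
    mul_nonpos_of_nonneg_of_nonpos (iGamma_nonneg a hx.le)
      (mul_nonpos_of_nonpos_of_nonneg hp (rpow_nonneg hx.le _))
  linarith

lemma hasDerivAt_rpow_neg_mul_add {x : ℝ} (ν c : ℝ) (hx : 0 < x) :
    HasDerivAt (fun y => y ^ (-ν) * (y + c)) ((1 - ν) * x ^ (-ν) - ν * c * x ^ (-ν - 1)) x := by
  have h := (hasDerivAt_rpow_const (p := -ν) (Or.inl hx.ne')).mul ((hasDerivAt_id' x).add_const c)
  have hx_pow : x ^ (-ν - 1) * x = x ^ (-ν) := by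
    rw [← rpow_add_one hx.ne', sub_add_cancel]
  refine h.congr_deriv ?_
  linear_combination -ν * hx_pow

lemma rpow_neg_mul_add_deriv_le {m x ν : ℝ} (c : ℝ) (hm : 0 < m) (hmx : m ≤ x) (hν : 0 ≤ ν) :
    (1 - ν) * x ^ (-ν) - ν * c * x ^ (-ν - 1) ≤ m ^ (-ν) * (|1 - ν| + ν * |c| / m) := by
  have hx : 0 < x := hm.trans_le hmx
  have h₁ : (1 - ν) * x ^ (-ν) ≤ |1 - ν| * m ^ (-ν) :=
    calc (1 - ν) * x ^ (-ν) ≤ |1 - ν| * x ^ (-ν) :=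
          mul_le_mul_of_nonneg_right (le_abs_self _) (rpow_nonneg hx.le _)
      _ ≤ |1 - ν| * m ^ (-ν) :=
          mul_le_mul_of_nonneg_left (rpow_le_rpow_of_nonpos hm hmx (by linarith)) (abs_nonneg _)
  have h₂ : -(ν * c * x ^ (-ν - 1)) ≤ ν * |c| * m ^ (-ν - 1) :=
    calc -(ν * c * x ^ (-ν - 1)) ≤ ν * |c| * x ^ (-ν - 1) := by
          rw [← neg_mul, ← mul_neg]
          gcongr
          exact neg_le_abs c
      _ ≤ ν * |c| * m ^ (-ν - 1) := mul_le_mul_of_nonneg_left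
          (rpow_le_rpow_of_nonpos hm hmx (by linarith)) (mul_nonneg hν (abs_nonneg _))
  have hm_pow : m ^ (-ν - 1) = m ^ (-ν) / m := by
    rw [rpow_sub hm, rpow_one]
  rw [hm_pow] at h₂
  have h_split : m ^ (-ν) * (|1 - ν| + ν * |c| / m)
      = |1 - ν| * m ^ (-ν) + ν * |c| * (m ^ (-ν) / m) := by
    ring
  linarith

lemma A2f_nonneg {α β φ : ℝ} (hα : α ≤ 1) (hβ : 0 < β) (hφ₀ : 0 < φ) (hφ : φ < 2 * π) :
    0 ≤ A2f α β φ := by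
  have hsin : 0 < 2 * sin (φ / 2) :=
    mul_pos two_pos (sin_pos_of_pos_of_lt_pi (by linarith) (by linarith))
  have hpow : (2 : ℝ) ^ (-β) ≤ (2 * sin (φ / 2)) ^ (-β) :=
    rpow_le_rpow_of_nonpos hsin (by linarith [sin_le_one (φ / 2)]) (by linarith)
  have hΓ := (Gamma_pos_of_pos hβ).le
  unfold A2f
  apply div_nonneg _ (by positivity)
  exact mul_nonneg (mul_nonneg (by linarith) hΓ) (by linarith)

theorem statement16_general (α β : ℝ) (hα : α ∈ Set.Ioo (0:ℝ) 1) (hβ : β ∈ Set.Ioo (0:ℝ) 1)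
    (φ : ℝ) (hφ : φ ∈ Set.Ioo (0:ℝ) π)
    (μ0 μi : ℝ) (hμi : 0 ≤ μi) (n : ℝ) (hn : 5 ≤ n) :
    DifferentiableAt ℝ (Jf α β φ μ0 μi) n ∧ deriv (Jf α β φ μ0 μi) n ≥ F2f α β φ := by
  set ν := α + β
  set c₂ := (α - β) * (1 + α) / 2
  have hn₀ : 0 < n := by linarith
  have hν : 0 < ν := by linarith [hα.1, hβ.1]
  have hg := hasDerivAt_rpow_neg_mul_add ν c₂ hn₀
  have hh := hasDerivAt_iGamma_mul_rpow (-1 - ν) (by linarith [hα.1] : 0 < 3 + α) hn₀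
  have hJ : HasDerivAt (Jf α β φ μ0 μi) _ n :=
    ((((hasDerivAt_id' n).add_const ((α - β) * (1 - β) / 2)).const_mul (ν⁻¹ * A1f α φ)).sub
      ((hg.const_mul (ν⁻¹ * A2f α β φ)).add_const (μ0 * Gamma (2 - β)))).sub (hh.const_mul μi)
      |>.congr_of_eventuallyEq (.of_forall fun y => by simp only [Jf, Pi.sub_apply]; ring)
  refine ⟨hJ.differentiableAt, ?_⟩
  rw [hJ.deriv, ge_iff_le, F2f]
  have hg_le := rpow_neg_mul_add_deriv_le c₂ (by norm_num) hn hν.le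
  have hh_le := iGamma_mul_rpow_deriv_nonpos (a := 3 + α) (by linarith : -1 - ν ≤ 0) hn₀
  have hA2 := A2f_nonneg hα.2.le hβ.1 hφ.1 (by linarith [hφ.2, pi_pos])
  have hA2_term := mul_le_mul_of_nonneg_left hg_le (mul_nonneg (inv_nonneg.2 hν.le) hA2)
  have hμi_term := mul_nonpos_of_nonneg_of_nonpos hμi hh_le
  linarith

/-- Case `α < β`: `J` is differentiable on `[5,∞)` with `J'(n) ≥ F₂(α,β,φ)`. -/
theorem statement16 (α β : ℝ) (hα : α ∈ Set.Ioo (0:ℝ) 1) (hβ : β ∈ Set.Ioo (0:ℝ) 1)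
    (hab : α < β) (φ : ℝ) (hφ : φ ∈ Set.Ioo (0:ℝ) π)
    (μ0 μi : ℝ) (hμ0 : 0 ≤ μ0) (hμi : 0 ≤ μi) (n : ℝ) (hn : 5 ≤ n) :
    DifferentiableAt ℝ (Jf α β φ μ0 μi) n ∧ deriv (Jf α β φ μ0 μi) n ≥ F2f α β φ :=
  statement16_general α β hα hβ φ hφ μ0 μi hμi n hn

end
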